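/- arXiv:2311.03760 — 2 statements merged into one kernel-verified Lean document; each statement's English description precedes it below -/
import Mathlib

section
/- Let k be a kernel with k(x,x) = 1 for all x, and let σ² > 0 be the noise variance. For a Gaussian process posterior after n observations, the posterior variance at every point x is bounded below: σ_n²(x) ≥ σ²/(σ² + n). -/
/-!
The Schur complement of the unit corner of the joint kernel matrix gives `K - v vᵀ ⪰ 0`.
With `u = (K + s I)⁻¹ v` and `c = v ⬝ u`, this yields `c² ≤ uᵀ K u = c - s ‖u‖²`, while
Cauchy–Schwarz and `‖v‖² ≤ tr K ≤ n` yield `c² ≤ n ‖u‖²`. Eliminating `‖u‖²` gives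
`(s + n) c ≤ n`, which is the bound `1 - c ≥ s / (s + n)`.
-/

open Matrix

namespace Matrix

variable {ι : Type*} [Fintype ι] {K : Matrix ι ι ℝ} {v : ι → ℝ}

theorem posSemidef_sub_vecMulVec_of_posSemidef_fromBlocks
    (h : (fromBlocks 1 (replicateRow Unit v) (replicateCol Unit v) K).PosSemidef) :
    (K - vecMulVec v v).PosSemidef := by
  have hB : (replicateRow Unit v)ᴴ = replicateCol Unit v := by ext; simp
  let : Invertible (1 : Matrix Unit Unit ℝ) := invertibleOne
  rw [← hB, PosDef.fromBlocks₁₁ _ _ PosDef.one] at h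
  simpa [hB, vecMulVec_eq Unit] using h

theorem sq_dotProduct_le_dotProduct_mulVec (h : (K - vecMulVec v v).PosSemidef) (x : ι → ℝ) :
    (v ⬝ᵥ x) ^ 2 ≤ x ⬝ᵥ K *ᵥ x := by
  have := h.dotProduct_mulVec_nonneg x
  rw [star_trivial, sub_mulVec, dotProduct_sub, vecMulVec_mulVec, sub_nonneg] at this
  simpa [sq, dotProduct_comm x v] using this

theorem dotProduct_self_le_trace (h : (K - vecMulVec v v).PosSemidef) : v ⬝ᵥ v ≤ K.trace := by
  simpa [trace_sub, trace_vecMulVec] using h.trace_nonneg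

theorem trace_le_card_of_diag_le_one (hdiag : ∀ i, K i i ≤ 1) : K.trace ≤ Fintype.card ι := by
  simpa [trace] using Finset.sum_le_sum fun i (_ : i ∈ Finset.univ) => hdiag i

theorem sq_dotProduct_le_mul (u w : ι → ℝ) : (u ⬝ᵥ w) ^ 2 ≤ (u ⬝ᵥ u) * (w ⬝ᵥ w) := by
  simpa [dotProduct, sq] using Finset.sum_mul_sq_le_sq_mul_sq Finset.univ u w

variable [DecidableEq ι]

theorem dotProduct_mulVec_eq_of_add_smul_one_mulVec_eq {s : ℝ} {u : ι → ℝ}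
    (hu : (K + s • 1) *ᵥ u = v) : u ⬝ᵥ K *ᵥ u = v ⬝ᵥ u - s * (u ⬝ᵥ u) := by
  rw [← hu, add_mulVec, smul_mulVec, one_mulVec, add_dotProduct, smul_dotProduct, smul_eq_mul,
    dotProduct_comm _ u]
  ring

end Matrix

theorem div_add_le_one_sub_of_sq_le {s n c w : ℝ} (hs : 0 < s) (hn : 0 ≤ n) (hw : 0 ≤ w)
    (h₁ : c ^ 2 ≤ c - s * w) (h₂ : c ^ 2 ≤ n * w) : s / (s + n) ≤ 1 - c := by
  have hc : (s + n) * c ^ 2 ≤ n * c := by nlinarith [mul_le_mul_of_nonneg_left h₂ hs.le]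
  rw [div_le_iff₀ (by positivity)]
  rcases (show 0 ≤ c by nlinarith).eq_or_lt with rfl | hc0
  · simpa using hn
  · nlinarith

theorem posterior_variance_lower_bound (n : ℕ) (s : ℝ) (hs : 0 < s)
    (K : Matrix (Fin n) (Fin n) ℝ) (v : Fin n → ℝ)
    (hdiag : ∀ i, K i i ≤ 1)
    (hPSD : (Matrix.fromBlocks (Matrix.of fun (_ : Unit) (_ : Unit) => (1 : ℝ))
        (Matrix.of fun (_ : Unit) j => v j) (Matrix.of fun i (_ : Unit) => v i) K).PosSemidef) :
    s / (s + n) ≤ 1 - v ⬝ᵥ ((K + s • (1 : Matrix (Fin n) (Fin n) ℝ))⁻¹ *ᵥ v) := by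
  -- the `of` blocks in `hPSD` are `1`, `replicateRow Unit v`, `replicateCol Unit v` up to defeq
  have hKv : (K - vecMulVec v v).PosSemidef :=
    posSemidef_sub_vecMulVec_of_posSemidef_fromBlocks hPSD
  have hK : K.PosSemidef := by simpa using hKv.add (posSemidef_vecMulVec_self_star v)
  have hA : IsUnit (K + s • 1).det :=
    (isUnit_iff_isUnit_det _).mp (PosDef.posSemidef_add hK (PosDef.one.smul hs)).isUnit
  set u := (K + s • 1)⁻¹ *ᵥ v
  have hu : (K + s • 1) *ᵥ u = v := by
    rw [mulVec_mulVec, mul_nonsing_inv _ hA, one_mulVec]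
  refine div_add_le_one_sub_of_sq_le hs n.cast_nonneg (dotProduct_self_star_nonneg u) ?_ ?_
  · calc (v ⬝ᵥ u) ^ 2 ≤ u ⬝ᵥ K *ᵥ u := sq_dotProduct_le_dotProduct_mulVec hKv u
      _ = v ⬝ᵥ u - s * (u ⬝ᵥ u) := dotProduct_mulVec_eq_of_add_smul_one_mulVec_eq hu
  · calc (v ⬝ᵥ u) ^ 2 ≤ (v ⬝ᵥ v) * (u ⬝ᵥ u) := sq_dotProduct_le_mul v u
      _ ≤ n * (u ⬝ᵥ u) := by
        gcongr
        · exact dotProduct_self_star_nonneg u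
        · simpa using (dotProduct_self_le_trace hKv).trans (trace_le_card_of_diag_le_one hdiag)
end

section
/- Let μ, σ : X → ℝ with σ(x) > 0 for all x in a finite set X, and let g* ∈ ℝ. Define x_UCB ∈ argmax_{x ∈ X} {μ(x) + ξ·σ(x)} where ξ = min_{x ∈ X} (g* - μ(x))/σ(x), and x_PIMS ∈ argmin_{x ∈ X} (g* - μ(x))/σ(x). Then max_{x ∈ X} {μ(x) + ξ·σ(x)} = g*, and the two argmax/argmin sets coincide: x is a minimizer of (g* - μ(x))/σ(x) if and only if x is a maximizer of μ(x) + ξ·σ(x). -/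
/-! Since `σ > 0`, `ξ ≤ (g - μ x) / σ x` is equivalent to `μ x + ξ σ x ≤ g`, with equality on both
sides at the same points. Taking for `ξ` the minimal normalized gap, every `μ x + ξ σ x` is at most
`g`, and the value `g` is attained exactly at the minimizers of the gap, which exist by finiteness. -/

section NormalizedGap

variable {m s g ξ : ℝ}

lemma le_sub_div_iff_add_mul_le (hs : 0 < s) : ξ ≤ (g - m) / s ↔ m + ξ * s ≤ g := by
  rw [le_div_iff₀ hs]
  constructor <;> intro h <;> linarith

lemma sub_div_eq_iff_add_mul_eq (hs : 0 < s) : (g - m) / s = ξ ↔ m + ξ * s = g := by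
  rw [div_eq_iff hs.ne']
  constructor <;> intro h <;> linarith

end NormalizedGap

lemma isGreatest_range_add_iInf_sub_div_mul {X : Type*} [Finite X] [Nonempty X]
    {μ σ : X → ℝ} (hσ : ∀ x, 0 < σ x) (g : ℝ) :
    IsGreatest (Set.range fun x => μ x + (⨅ y, (g - μ y) / σ y) * σ x) g := by
  obtain ⟨x₀, hx₀⟩ := exists_eq_ciInf_of_finite (f := fun y => (g - μ y) / σ y)
  refine ⟨⟨x₀, (sub_div_eq_iff_add_mul_eq (hσ x₀)).mp hx₀⟩, ?_⟩
  rintro _ ⟨x, rfl⟩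
  exact (le_sub_div_iff_add_mul_le (hσ x)).mp (ciInf_le (Finite.bddBelow_range _) x)

theorem pims_ucb_equivalence {X : Type*} [Fintype X] [Nonempty X]
    (μ σ : X → ℝ) (hσ : ∀ x, 0 < σ x) (g : ℝ) :
    (⨆ x, (μ x + (⨅ y, (g - μ y) / σ y) * σ x)) = g ∧
    (∀ x : X, (g - μ x) / σ x = (⨅ y, (g - μ y) / σ y) ↔
      μ x + (⨅ y, (g - μ y) / σ y) * σ x = ⨆ y, (μ y + (⨅ z, (g - μ z) / σ z) * σ y)) := by
  have hsup : (⨆ x, (μ x + (⨅ y, (g - μ y) / σ y) * σ x)) = g :=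
    (isGreatest_range_add_iInf_sub_div_mul hσ g).csSup_eq
  refine ⟨hsup, fun x => ?_⟩
  rw [hsup]
  exact sub_div_eq_iff_add_mul_eq (hσ x)
end
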